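/- Suppose the two environments share the same second-moment matrix, Σ₁ = Σ₂ = Σ with Σ symmetric positive definite (while ρ₁, ρ₂ may differ). For actions w = (w₁, w₂), define the utility gradient of environment e as v_e(w) = 2ρ_e − 2Σ(w₁ + w₂). Then the pure Nash equilibria of the constrained game C-LRG are variationally stable: for every pure Nash equilibrium (w₁†, w₂†) of C-LRG and every (w₁, w₂) ∈ 𝒲 × 𝒲, it holds that v₁(w)ᵀ(w₁ − w₁†) + v₂(w)ᵀ(w₂ − w₂†) ≤ 0. -/

import Mathlib

open Matrix

/-- Risk of an environment with second-moment matrix `S` and cross-moment vector `ρ`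
at the joint action `(w₁, w₂)`:  `(w₁+w₂)ᵀ S (w₁+w₂) − 2 ρᵀ (w₁+w₂)`. -/
noncomputable def risk {n : ℕ} (S : Matrix (Fin n) (Fin n) ℝ) (ρ : Fin n → ℝ)
    (w₁ w₂ : Fin n → ℝ) : ℝ :=
  (w₁ + w₂) ⬝ᵥ (S *ᵥ (w₁ + w₂)) - 2 * (ρ ⬝ᵥ (w₁ + w₂))

/-!
Each player's risk depends only on `w₁ + w₂`, through the same convex quadratic. At a Nash
equilibrium `w†` the first-order conditions give `(S (w₁† + w₂†) − ρₑ) ⬝ (wₑ − wₑ†) ≥ 0` for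
every feasible `wₑ`. Writing `δₑ = wₑ − wₑ†`, the pairing `v₁(w) ⬝ δ₁ + v₂(w) ⬝ δ₂` equals
`−2` times the sum of these two first-order terms and of `(δ₁ + δ₂)ᵀ S (δ₁ + δ₂) ≥ 0`.
-/

theorem nonneg_of_forall_mul_add_mul_sq_nonneg {a b : ℝ}
    (h : ∀ t ∈ Set.Ioc (0 : ℝ) 1, 0 ≤ t * a + t ^ 2 * b) : 0 ≤ a := by
  have hlim : Filter.Tendsto (fun t : ℝ => a + t * b) (nhdsWithin 0 (Set.Ioi 0)) (nhds a) := by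
    have : Continuous fun t : ℝ => a + t * b := by fun_prop
    simpa using (this.tendsto 0).mono_left nhdsWithin_le_nhds
  refine ge_of_tendsto hlim ?_
  filter_upwards [Ioc_mem_nhdsGT (zero_lt_one' ℝ)] with t ht
  have : 0 ≤ t * (a + t * b) := by linarith [h t ht]
  exact nonneg_of_mul_nonneg_right this ht.1

section

variable {ι R : Type*} [Fintype ι] [CommRing R]

theorem Matrix.IsSymm.dotProduct_mulVec_comm {A : Matrix ι ι R} (hA : A.IsSymm) (x y : ι → R) :
    x ⬝ᵥ A *ᵥ y = y ⬝ᵥ A *ᵥ x := by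
  rw [← dotProduct_transpose_mulVec, hA.eq]

theorem gradient_pairing_eq (S : Matrix ι ι R) (ρ₁ ρ₂ a₁ a₂ w₁ w₂ : ι → R) :
    ((2 : R) • ρ₁ - (2 : R) • (S *ᵥ (w₁ + w₂))) ⬝ᵥ (w₁ - a₁) +
      ((2 : R) • ρ₂ - (2 : R) • (S *ᵥ (w₁ + w₂))) ⬝ᵥ (w₂ - a₂) =
    -2 * ((S *ᵥ (a₁ + a₂) - ρ₁) ⬝ᵥ (w₁ - a₁)) - 2 * ((S *ᵥ (a₁ + a₂) - ρ₂) ⬝ᵥ (w₂ - a₂)) -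
      2 * ((w₁ - a₁ + (w₂ - a₂)) ⬝ᵥ S *ᵥ (w₁ - a₁ + (w₂ - a₂))) := by
  have hsum : w₁ + w₂ = a₁ + a₂ + (w₁ - a₁ + (w₂ - a₂)) := by abel
  rw [hsum, dotProduct_comm _ (S *ᵥ _)]
  simp only [mulVec_add, sub_dotProduct, add_dotProduct, dotProduct_add, smul_dotProduct,
    smul_eq_mul]
  ring

end

section

variable {n : ℕ} {S : Matrix (Fin n) (Fin n) ℝ} {ρ : Fin n → ℝ}

theorem risk_comm (u z : Fin n → ℝ) : risk S ρ u z = risk S ρ z u := by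
  rw [risk, risk, add_comm u]

theorem risk_add_smul (hS : S.IsSymm) (u z d : Fin n → ℝ) (t : ℝ) :
    risk S ρ (u + t • d) z =
      risk S ρ u z + t * (2 * ((S *ᵥ (u + z) - ρ) ⬝ᵥ d)) + t ^ 2 * (d ⬝ᵥ S *ᵥ d) := by
  have hsum : u + t • d + z = u + z + t • d := by abel
  have hcross := hS.dotProduct_mulVec_comm (u + z) d
  rw [risk, risk, hsum, dotProduct_comm _ d]
  simp only [mulVec_add, mulVec_smul, dotProduct_sub, dotProduct_add, add_dotProduct,
    dotProduct_smul, smul_dotProduct, smul_eq_mul] at hcross ⊢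
  linear_combination t * hcross - 2 * t * dotProduct_comm ρ d

theorem risk_gradient_nonneg_of_isMinOn {C : Set (Fin n → ℝ)} (hC : Convex ℝ C)
    (hS : S.IsSymm) {z wd w : Fin n → ℝ} (hmin : IsMinOn (fun u => risk S ρ u z) C wd)
    (hwd : wd ∈ C) (hw : w ∈ C) : 0 ≤ (S *ᵥ (wd + z) - ρ) ⬝ᵥ (w - wd) := by
  suffices 0 ≤ 2 * ((S *ᵥ (wd + z) - ρ) ⬝ᵥ (w - wd)) by linarith
  refine nonneg_of_forall_mul_add_mul_sq_nonneg (b := (w - wd) ⬝ᵥ S *ᵥ (w - wd)) fun t ht => ?_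
  have hmem : wd + t • (w - wd) ∈ C := hC.add_smul_sub_mem hwd hw (Set.Ioc_subset_Icc_self ht)
  have hle := isMinOn_iff.mp hmin _ hmem
  simp only [risk_add_smul hS] at hle
  linarith

end

theorem clrg_variational_stability_general {n : ℕ}
    (S : Matrix (Fin n) (Fin n) ℝ) (hS : S.PosDef)
    (ρ₁ ρ₂ : Fin n → ℝ) (W : ℝ)
    (w₁d w₂d : Fin n → ℝ) (hw₁d : ‖w₁d‖ ≤ W) (hw₂d : ‖w₂d‖ ≤ W)
    (hN₁ : ∀ u : Fin n → ℝ, ‖u‖ ≤ W → risk S ρ₁ w₁d w₂d ≤ risk S ρ₁ u w₂d)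
    (hN₂ : ∀ v : Fin n → ℝ, ‖v‖ ≤ W → risk S ρ₂ w₁d w₂d ≤ risk S ρ₂ w₁d v)
    (w₁ w₂ : Fin n → ℝ) (hw₁ : ‖w₁‖ ≤ W) (hw₂ : ‖w₂‖ ≤ W) :
    ((2 : ℝ) • ρ₁ - (2 : ℝ) • (S *ᵥ (w₁ + w₂))) ⬝ᵥ (w₁ - w₁d) +
    ((2 : ℝ) • ρ₂ - (2 : ℝ) • (S *ᵥ (w₁ + w₂))) ⬝ᵥ (w₂ - w₂d) ≤ 0 := by
  have hsymm : S.IsSymm := isHermitian_iff_isSymm.mp hS.isHermitian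
  have hball : Convex ℝ (Metric.closedBall (0 : Fin n → ℝ) W) := convex_closedBall 0 W
  have foc₁ : 0 ≤ (S *ᵥ (w₁d + w₂d) - ρ₁) ⬝ᵥ (w₁ - w₁d) :=
    risk_gradient_nonneg_of_isMinOn hball hsymm
      (isMinOn_iff.mpr fun u hu => hN₁ u (mem_closedBall_zero_iff.mp hu))
      (mem_closedBall_zero_iff.mpr hw₁d) (mem_closedBall_zero_iff.mpr hw₁)
  have foc₂ : 0 ≤ (S *ᵥ (w₂d + w₁d) - ρ₂) ⬝ᵥ (w₂ - w₂d) :=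
    risk_gradient_nonneg_of_isMinOn hball hsymm
      (isMinOn_iff.mpr fun v hv => by
        simpa only [risk_comm _ w₁d] using hN₂ v (mem_closedBall_zero_iff.mp hv))
      (mem_closedBall_zero_iff.mpr hw₂d) (mem_closedBall_zero_iff.mpr hw₂)
  rw [add_comm w₂d] at foc₂
  have hquad := hS.posSemidef.dotProduct_mulVec_nonneg (w₁ - w₁d + (w₂ - w₂d))
  rw [star_trivial] at hquad
  rw [gradient_pairing_eq]
  linarith

/-- **variational stability when `Σ₁ = Σ₂`.** Suppose both environments
share the same positive definite second-moment matrix `S` (while `ρ₁, ρ₂` may differ),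
and let `v_e(w) = 2ρ_e − 2S(w₁+w₂)` be the utility gradient of environment `e`.
Then every pure Nash equilibrium `(w₁†, w₂†)` of C-LRG is variationally stable:
for all `(w₁, w₂) ∈ 𝒲 × 𝒲`, `v₁(w)ᵀ(w₁ − w₁†) + v₂(w)ᵀ(w₂ − w₂†) ≤ 0`. -/
theorem clrg_variational_stability {n : ℕ}
    (S : Matrix (Fin n) (Fin n) ℝ) (hS : S.PosDef)
    (ρ₁ ρ₂ : Fin n → ℝ) (W : ℝ) (hW : 0 < W)
    (w₁d w₂d : Fin n → ℝ) (hw₁d : ‖w₁d‖ ≤ W) (hw₂d : ‖w₂d‖ ≤ W)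
    (hN₁ : ∀ u : Fin n → ℝ, ‖u‖ ≤ W → risk S ρ₁ w₁d w₂d ≤ risk S ρ₁ u w₂d)
    (hN₂ : ∀ v : Fin n → ℝ, ‖v‖ ≤ W → risk S ρ₂ w₁d w₂d ≤ risk S ρ₂ w₁d v)
    (w₁ w₂ : Fin n → ℝ) (hw₁ : ‖w₁‖ ≤ W) (hw₂ : ‖w₂‖ ≤ W) :
    ((2 : ℝ) • ρ₁ - (2 : ℝ) • (S *ᵥ (w₁ + w₂))) ⬝ᵥ (w₁ - w₁d) +
    ((2 : ℝ) • ρ₂ - (2 : ℝ) • (S *ᵥ (w₁ + w₂))) ⬝ᵥ (w₂ - w₂d) ≤ 0 :=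
  clrg_variational_stability_general S hS ρ₁ ρ₂ W w₁d w₂d hw₁d hw₂d hN₁ hN₂ w₁ w₂ hw₁ hw₂
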